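/- arXiv:0906.2378 — 2 statements merged into one kernel-verified Lean document; each statement's English description precedes it below -/
import Mathlib

section
/- Let H = H(Ψ,c) be a graded affine Hecke algebra with root system R in V, Weyl group W, W-invariant parameter function c, and fixed positive system R⁺. For f ∈ V*, define f̃ = f − (1/2)Σ_{β∈R⁺} c(β) f(β) s_β. Then for every simple reflection s_α and every f ∈ V*, one has s_α f̃ = (s_α·f)~ s_α in H (equivalently s_α f̃ s_α = (s_α·f)~). -/
noncomputable section Stmt10

open FreeAlgebra

/-- Defining relations of the graded affine Hecke algebra `H(Ψ,c)` (Lusztig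
presentation): `ℂ[W]` and `S(V*)` are subalgebras, and for each simple root `α` and each
`f ∈ V*` one has `s_α f - (s_α · f) s_α = c(α) f(α)`.  Here `ρ` is the action of the Weyl
group `W` on `V`, `s β ∈ W` is the reflection in a root `β`, `c` is the parameter
function, and `SP` is the set of simple roots. -/
inductive GRel (Vc : Type) [AddCommGroup Vc] [Module ℂ Vc] (W : Type) [Group W]
    (ρ : Representation ℂ W Vc) (s : Vc → W) (c : Vc → ℂ) (SP : Finset Vc) :
    FreeAlgebra ℂ (W ⊕ Module.Dual ℂ Vc) → FreeAlgebra ℂ (W ⊕ Module.Dual ℂ Vc) → Prop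
  | grp_mul (w w' : W) : GRel Vc W ρ s c SP
      (ι ℂ (Sum.inl w) * ι ℂ (Sum.inl w')) (ι ℂ (Sum.inl (w * w')))
  | grp_one : GRel Vc W ρ s c SP (ι ℂ (Sum.inl (1 : W))) 1
  | lin_add (f g : Module.Dual ℂ Vc) : GRel Vc W ρ s c SP
      (ι ℂ (Sum.inr (f + g))) (ι ℂ (Sum.inr f) + ι ℂ (Sum.inr g))
  | lin_smul (a : ℂ) (f : Module.Dual ℂ Vc) : GRel Vc W ρ s c SP
      (ι ℂ (Sum.inr (a • f))) (a • ι ℂ (Sum.inr f))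
  | lin_comm (f g : Module.Dual ℂ Vc) : GRel Vc W ρ s c SP
      (ι ℂ (Sum.inr f) * ι ℂ (Sum.inr g)) (ι ℂ (Sum.inr g) * ι ℂ (Sum.inr f))
  | cross (α : Vc) (hα : α ∈ SP) (f : Module.Dual ℂ Vc) : GRel Vc W ρ s c SP
      (ι ℂ (Sum.inl (s α)) * ι ℂ (Sum.inr f))
      (ι ℂ (Sum.inr (f ∘ₗ (ρ (s α)⁻¹ : Vc →ₗ[ℂ] Vc))) * ι ℂ (Sum.inl (s α))
        + (c α * f α) • 1)

/-- The graded affine Hecke algebra `H(Ψ,c)`, presented by the relations `GRel`. -/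
abbrev GAHA (Vc : Type) [AddCommGroup Vc] [Module ℂ Vc] (W : Type) [Group W]
    (ρ : Representation ℂ W Vc) (s : Vc → W) (c : Vc → ℂ) (SP : Finset Vc) :=
  RingQuot (GRel Vc W ρ s c SP)

variable (Vc : Type) [AddCommGroup Vc] [Module ℂ Vc] (W : Type) [Group W]
  (ρ : Representation ℂ W Vc) (s : Vc → W) (c : Vc → ℂ) (SP : Finset Vc)

/-- The image of `w ∈ W` in `H(Ψ,c)`. -/
def gw (w : W) : GAHA Vc W ρ s c SP :=
  RingQuot.mkAlgHom ℂ (GRel Vc W ρ s c SP) (ι ℂ (Sum.inl w))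

/-- The image of `f ∈ V*` in `H(Ψ,c)`. -/
def gf (f : Module.Dual ℂ Vc) : GAHA Vc W ρ s c SP :=
  RingQuot.mkAlgHom ℂ (GRel Vc W ρ s c SP) (ι ℂ (Sum.inr f))

/-- The Drinfeld-type element `f̃ = f - (1/2) Σ_{β ∈ R⁺} c(β) f(β) s_β`. -/
def tildef (Rp : Finset Vc) (f : Module.Dual ℂ Vc) : GAHA Vc W ρ s c SP :=
  gf Vc W ρ s c SP f
    - (1/2 : ℂ) • ∑ β ∈ Rp, (c β * f β) • gw Vc W ρ s c SP (s β)

/-- In `H = H(Ψ,c)` with positive roots `R⁺` and simple roots `SP`, for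
`f ∈ V*` set `f̃ = f - (1/2) Σ_{β∈R⁺} c(β) f(β) s_β`.  Then for every simple root `α` and
every `f ∈ V*`: `s_α f̃ = (s_α · f)~ s_α`.  (The hypotheses record the standard facts about
the root system: the simple reflection `s_α` is an involution negating `α` and permuting
the remaining positive roots, reflections transform by conjugation, and `c` is
`W`-invariant.) -/
theorem stmt10
    (Rp : Finset Vc) (hSP : SP ⊆ Rp)
    (hss : ∀ α ∈ SP, s α * s α = 1)
    (hinvroot : ∀ α ∈ SP, ρ (s α) α = -α)
    (hperm : ∀ α ∈ SP, ∀ β ∈ Rp, β ≠ α → ρ (s α) β ∈ Rp ∧ ρ (s α) β ≠ α)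
    (hreflconj : ∀ α ∈ SP, ∀ β ∈ Rp, s (ρ (s α) β) = s α * s β * (s α)⁻¹)
    (hnegroot : ∀ β ∈ Rp, s (-β) = s β)
    (hcW : ∀ (w : W) (β : Vc), c (ρ w β) = c β)
    (hcneg : ∀ β : Vc, c (-β) = c β) :
    ∀ α ∈ SP, ∀ f : Module.Dual ℂ Vc,
      gw Vc W ρ s c SP (s α) * tildef Vc W ρ s c SP Rp f
        = tildef Vc W ρ s c SP Rp (f ∘ₗ (ρ (s α)⁻¹ : Vc →ₗ[ℂ] Vc))
            * gw Vc W ρ s c SP (s α) := by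
  intro α hα f
  classical
  have hmul : ∀ w w' : W,
      gw Vc W ρ s c SP w * gw Vc W ρ s c SP w' = gw Vc W ρ s c SP (w * w') := by
    intro w w'
    unfold gw
    rw [← map_mul]
    exact RingQuot.mkAlgHom_rel ℂ (GRel.grp_mul w w')
  have hone : gw Vc W ρ s c SP 1 = 1 := by
    unfold gw
    have := RingQuot.mkAlgHom_rel ℂ
      (GRel.grp_one (Vc := Vc) (W := W) (ρ := ρ) (s := s) (c := c) (SP := SP))
    simpa using this
  have hsainv : (s α)⁻¹ = s α := inv_eq_of_mul_eq_one_right (hss α hα)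
  set f' : Module.Dual ℂ Vc := f ∘ₗ (ρ (s α)⁻¹ : Vc →ₗ[ℂ] Vc) with hf'
  have hf'app : ∀ β : Vc, f' β = f (ρ (s α) β) := by
    intro β; simp [hf', hsainv]
  have hcross : gw Vc W ρ s c SP (s α) * gf Vc W ρ s c SP f
      = gf Vc W ρ s c SP f' * gw Vc W ρ s c SP (s α) + (c α * f α) • 1 := by
    unfold gw gf
    rw [← map_mul, RingQuot.mkAlgHom_rel ℂ (GRel.cross α hα f)]
    simp [hf']
  -- the key sum identity
  have hS : ∑ β ∈ Rp, (c β * f β) • gw Vc W ρ s c SP (s α * s β)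
      = (∑ β ∈ Rp, (c β * f' β) • gw Vc W ρ s c SP (s β * s α))
        + (2 * (c α * f α)) • 1 := by
    have hαRp : α ∈ Rp := hSP hα
    rw [← Finset.sum_erase_add Rp _ hαRp, ← Finset.sum_erase_add Rp _ hαRp]
    have herase : ∑ β ∈ Rp.erase α, (c β * f β) • gw Vc W ρ s c SP (s α * s β)
        = ∑ β ∈ Rp.erase α, (c β * f' β) • gw Vc W ρ s c SP (s β * s α) := by
      refine Finset.sum_nbij' (fun β => ρ (s α) β) (fun β => ρ (s α) β) ?_ ?_ ?_ ?_ ?_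
      · intro β hβ
        obtain ⟨hβ2, hβ1⟩ := Finset.mem_erase.mp hβ
        exact Finset.mem_erase.mpr ⟨(hperm α hα β hβ1 hβ2).2, (hperm α hα β hβ1 hβ2).1⟩
      · intro β hβ
        obtain ⟨hβ2, hβ1⟩ := Finset.mem_erase.mp hβ
        exact Finset.mem_erase.mpr ⟨(hperm α hα β hβ1 hβ2).2, (hperm α hα β hβ1 hβ2).1⟩
      · intro β _
        show ρ (s α) (ρ (s α) β) = β
        have h : ρ (s α) (ρ (s α) β) = ρ (s α * s α) β := by
          simp [map_mul]
        rw [h, hss α hα]; simp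
      · intro β _
        show ρ (s α) (ρ (s α) β) = β
        have h : ρ (s α) (ρ (s α) β) = ρ (s α * s α) β := by
          simp [map_mul]
        rw [h, hss α hα]; simp
      · intro β hβ
        obtain ⟨hβ2, hβ1⟩ := Finset.mem_erase.mp hβ
        have hc : c (ρ (s α) β) = c β := hcW _ _
        have hfs : f' (ρ (s α) β) = f β := by
          rw [hf'app]
          have : ρ (s α) (ρ (s α) β) = ρ (s α * s α) β := by simp [map_mul]
          rw [this, hss α hα]; simp
        have hsb : s (ρ (s α) β) * s α = s α * s β := by
          rw [hreflconj α hα β hβ1, hsainv]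
          rw [mul_assoc, mul_assoc, hss α hα, mul_one]
        rw [hc, hfs, hsb]
    rw [herase]
    have hterm1 : (c α * f α) • gw Vc W ρ s c SP (s α * s α) = (c α * f α) • 1 := by
      rw [hss α hα, hone]
    have hterm2 : (c α * f' α) • gw Vc W ρ s c SP (s α * s α)
        = -((c α * f α) • 1) := by
      rw [hss α hα, hone, hf'app, hinvroot α hα, map_neg, mul_neg]
      exact neg_smul (c α * f α) (1 : GAHA Vc W ρ s c SP)
    rw [hterm1, hterm2]
    rw [two_mul, add_smul]
    abel
  -- expand both sides
  have hL : gw Vc W ρ s c SP (s α) * tildef Vc W ρ s c SP Rp f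
      = gf Vc W ρ s c SP f' * gw Vc W ρ s c SP (s α) + (c α * f α) • 1
        - (1/2 : ℂ) • ∑ β ∈ Rp, (c β * f β) • gw Vc W ρ s c SP (s α * s β) := by
    unfold tildef
    rw [mul_sub, hcross, mul_smul_comm, Finset.mul_sum]
    congr 2
    refine Finset.sum_congr rfl fun β _ => ?_
    rw [mul_smul_comm, hmul]
  have hR : tildef Vc W ρ s c SP Rp f' * gw Vc W ρ s c SP (s α)
      = gf Vc W ρ s c SP f' * gw Vc W ρ s c SP (s α)
        - (1/2 : ℂ) • ∑ β ∈ Rp, (c β * f' β) • gw Vc W ρ s c SP (s β * s α) := by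
    unfold tildef
    rw [sub_mul, smul_mul_assoc, Finset.sum_mul]
    congr 2
    refine Finset.sum_congr rfl fun β _ => ?_
    rw [smul_mul_assoc, hmul]
  rw [hL, hR, hS, smul_add, smul_smul]
  have h2 : (1/2 : ℂ) * (2 * (c α * f α)) = c α * f α := by ring
  rw [h2]
  abel

end Stmt10
end

section
/- Let G_R = GL(n,ℝ) with K_R = O(n), M_R = O(1)ⁿ the diagonal sign matrices, and V = ℂⁿ the defining representation with standard basis e_1,...,e_n. Let μ_0 = sgn (determinant character of O(n)). Then the space of M_R-invariants (μ_0* ⊗ V^{⊗m})^{M_R} is zero for m < n, and for m = n it has dimension n! with basis {e_{σ(1)} ⊗ ... ⊗ e_{σ(n)} : σ ∈ S_n}; moreover as a representation of W_R ≅ S_n (acting by signed permutation of tensor factors twisted by sgn), this space is isomorphic to the regular representation ℂ[S_n]. -/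
open scoped TensorProduct

noncomputable section Stmt13

variable (n : ℕ)

/-- The diagonal sign matrix `η ∈ M_ℝ = O(1)ⁿ` acting on `V = ℂⁿ`. -/
def diagSign (η : Fin n → ℤˣ) : Module.End ℂ (Fin n → ℂ) :=
  Matrix.toLin' (Matrix.diagonal (fun i : Fin n => ((η i : ℤ) : ℂ)))

/-- The action of `η ∈ M_ℝ` on `V^{⊗m}`. -/
def mAct (m : ℕ) (η : Fin n → ℤˣ) : Module.End ℂ (⨂[ℂ] _ : Fin m, (Fin n → ℂ)) :=
  PiTensorProduct.map (fun _ => diagSign n η)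

/-- The space of `M_ℝ`-invariants in `μ₀* ⊗ V^{⊗m}`, for `μ₀ = sgn`: vectors on which
`η` acts by the scalar `sgn(η) = ∏ᵢ ηᵢ`. -/
def invSpace (m : ℕ) : Submodule ℂ (⨂[ℂ] _ : Fin m, (Fin n → ℂ)) :=
  ⨅ η : Fin n → ℤˣ, Module.End.eigenspace (mAct n m η) (((∏ i, η i : ℤˣ) : ℤ) : ℂ)

/-- The signed permutation action of `W_ℝ = S_n` on `V^{⊗n}`. -/
def signedPermW (σ : Equiv.Perm (Fin n)) : Module.End ℂ (⨂[ℂ] _ : Fin n, (Fin n → ℂ)) :=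
  ((Equiv.Perm.sign σ : ℤ) : ℂ) •
    (PiTensorProduct.reindex ℂ (fun _ : Fin n => (Fin n → ℂ)) σ).toLinearMap

namespace Stmt13Aux

open PiTensorProduct

variable (m : ℕ)

def bvec (f : Fin m → Fin n) : ⨂[ℂ] _ : Fin m, (Fin n → ℂ) :=
  PiTensorProduct.tprod ℂ (fun j => (Pi.single (f j) 1 : Fin n → ℂ))

def coeffML : MultilinearMap ℂ (fun _ : Fin m => (Fin n → ℂ)) ((Fin m → Fin n) →₀ ℂ) :=
  ((Finsupp.linearEquivFunOnFinite ℂ ℂ (Fin m → Fin n)).symm.toLinearMap).compMultilinearMap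
    (MultilinearMap.pi fun f : Fin m → Fin n =>
      (MultilinearMap.mkPiAlgebra ℂ (Fin m) ℂ).compLinearMap fun j => LinearMap.proj (f j))

lemma coeffML_apply (v : Fin m → (Fin n → ℂ)) (f : Fin m → Fin n) :
    coeffML n m v f = ∏ j, v j (f j) := rfl

def toCoeff : (⨂[ℂ] _ : Fin m, (Fin n → ℂ)) →ₗ[ℂ] ((Fin m → Fin n) →₀ ℂ) :=
  PiTensorProduct.lift (coeffML n m)

lemma toCoeff_tprod (v : Fin m → (Fin n → ℂ)) (f : Fin m → Fin n) :
    toCoeff n m (PiTensorProduct.tprod ℂ v) f = ∏ j, v j (f j) := by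
  rw [toCoeff, PiTensorProduct.lift.tprod, coeffML_apply]

def ofCoeff : ((Fin m → Fin n) →₀ ℂ) →ₗ[ℂ] (⨂[ℂ] _ : Fin m, (Fin n → ℂ)) :=
  Finsupp.linearCombination ℂ (bvec n m)

lemma tprod_expand (v : Fin m → (Fin n → ℂ)) :
    (PiTensorProduct.tprod ℂ v : ⨂[ℂ] _ : Fin m, (Fin n → ℂ))
      = ∑ f : Fin m → Fin n, (∏ j, v j (f j)) • bvec n m f := by
  have hv : ∀ j, v j = ∑ i : Fin n, v j i • (Pi.single i 1 : Fin n → ℂ) := by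
    intro j; funext k
    simp [Finset.sum_apply, Pi.single_apply]
  calc (PiTensorProduct.tprod ℂ v : ⨂[ℂ] _ : Fin m, (Fin n → ℂ))
      = PiTensorProduct.tprod ℂ (fun j => ∑ i : Fin n, v j i • (Pi.single i 1 : Fin n → ℂ)) := by
        congr 1; funext j; exact hv j
    _ = ∑ f : Fin m → Fin n,
          PiTensorProduct.tprod ℂ (fun j => v j (f j) • (Pi.single (f j) 1 : Fin n → ℂ)) :=
        MultilinearMap.map_sum _ _
    _ = ∑ f : Fin m → Fin n, (∏ j, v j (f j)) • bvec n m f := by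
        refine Finset.sum_congr rfl fun f _ => ?_
        exact MultilinearMap.map_smul_univ _ _ _

lemma toCoeff_bvec (f : Fin m → Fin n) :
    toCoeff n m (bvec n m f) = Finsupp.single f 1 := by
  ext g
  rw [bvec, toCoeff_tprod]
  rcases eq_or_ne f g with h | h
  · subst h; simp [Finsupp.single_apply]
  · obtain ⟨j, hj⟩ := Function.ne_iff.mp h
    rw [Finsupp.single_apply, if_neg h]
    exact Finset.prod_eq_zero (Finset.mem_univ j) (by simp [Pi.single_apply, (Ne.symm hj)])

lemma ofCoeff_toCoeff : (ofCoeff n m).comp (toCoeff n m) = LinearMap.id := by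
  apply PiTensorProduct.ext
  apply MultilinearMap.ext
  intro v
  simp only [LinearMap.compMultilinearMap_apply, LinearMap.comp_apply, LinearMap.id_apply]
  rw [toCoeff, PiTensorProduct.lift.tprod]
  rw [ofCoeff, Finsupp.linearCombination_apply, Finsupp.sum_fintype]
  · rw [tprod_expand]
    refine Finset.sum_congr rfl fun f _ => ?_
    rfl
  · intro f; exact zero_smul _ _

lemma toCoeff_ofCoeff : (toCoeff n m).comp (ofCoeff n m) = LinearMap.id := by
  apply Finsupp.lhom_ext
  intro f c
  simp [ofCoeff, Finsupp.linearCombination_single, toCoeff_bvec, Finsupp.smul_single]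

def reprEquiv : (⨂[ℂ] _ : Fin m, (Fin n → ℂ)) ≃ₗ[ℂ] ((Fin m → Fin n) →₀ ℂ) :=
  LinearEquiv.ofLinear (toCoeff n m) (ofCoeff n m) (toCoeff_ofCoeff n m) (ofCoeff_toCoeff n m)

def B : Module.Basis (Fin m → Fin n) ℂ (⨂[ℂ] _ : Fin m, (Fin n → ℂ)) :=
  Module.Basis.ofRepr (reprEquiv n m)

lemma B_apply (f : Fin m → Fin n) : B n m f = bvec n m f := by
  have : B n m f = (reprEquiv n m).symm (Finsupp.single f 1) := rfl
  rw [this]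
  have : (reprEquiv n m).symm (Finsupp.single f 1) = ofCoeff n m (Finsupp.single f 1) := rfl
  rw [this, ofCoeff, Finsupp.linearCombination_single, one_smul]

lemma diagSign_apply (η : Fin n → ℤˣ) (w : Fin n → ℂ) (k : Fin n) :
    diagSign n η w k = ((η k : ℤ) : ℂ) * w k := by
  simp [diagSign, Matrix.toLin'_apply, Matrix.mulVec_diagonal]

lemma toCoeff_mAct (η : Fin n → ℤˣ) (x : ⨂[ℂ] _ : Fin m, (Fin n → ℂ)) (f : Fin m → Fin n) :
    toCoeff n m (mAct n m η x) f = (∏ j, ((η (f j) : ℤ) : ℂ)) * toCoeff n m x f := by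
  induction x using PiTensorProduct.induction_on with
  | smul_tprod r v =>
      simp only [map_smul, Finsupp.smul_apply, smul_eq_mul]
      rw [mAct, PiTensorProduct.map_tprod, toCoeff_tprod, toCoeff_tprod]
      have h1 : ∀ j ∈ Finset.univ, diagSign n η (v j) (f j)
          = ((η (f j) : ℤ) : ℂ) * v j (f j) := fun j _ => diagSign_apply n η (v j) (f j)
      rw [Finset.prod_congr rfl h1, Finset.prod_mul_distrib]
      ring
  | add x y hx hy =>
      simp only [map_add, Finsupp.add_apply]
      rw [hx, hy]
      ring

lemma mem_invSpace_iff (x : ⨂[ℂ] _ : Fin m, (Fin n → ℂ)) :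
    x ∈ invSpace n m ↔ ∀ (η : Fin n → ℤˣ) (f : Fin m → Fin n),
      (∏ j, ((η (f j) : ℤ) : ℂ)) * toCoeff n m x f
        = (((∏ i, η i : ℤˣ) : ℤ) : ℂ) * toCoeff n m x f := by
  rw [invSpace, Submodule.mem_iInf]
  refine forall_congr' fun η => ?_
  rw [Module.End.mem_eigenspace_iff]
  constructor
  · intro h f
    rw [← toCoeff_mAct, h, map_smul, Finsupp.smul_apply, smul_eq_mul]
  · intro h
    have h2 : toCoeff n m (mAct n m η x)
        = toCoeff n m ((((∏ i, η i : ℤˣ) : ℤ) : ℂ) • x) := by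
      ext f
      rw [toCoeff_mAct, map_smul, Finsupp.smul_apply, smul_eq_mul, h]
    exact (reprEquiv n m).injective h2

lemma prods_eq_of_mem {x : ⨂[ℂ] _ : Fin m, (Fin n → ℂ)} (hx : x ∈ invSpace n m)
    {f : Fin m → Fin n} (hf : toCoeff n m x f ≠ 0) (η : Fin n → ℤˣ) :
    (∏ j, η (f j)) = ∏ i, η i := by
  have h := mul_right_cancel₀ hf ((mem_invSpace_iff n m x).mp hx η f)
  have h3 : (((∏ j, η (f j) : ℤˣ) : ℤ) : ℂ) = (((∏ i, η i : ℤˣ) : ℤ) : ℂ) := by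
    push_cast at h ⊢
    exact h
  exact Units.ext (by exact_mod_cast h3)

lemma count_odd {f : Fin m → Fin n}
    (h : ∀ η : Fin n → ℤˣ, (∏ j, η (f j)) = ∏ i, η i) (i : Fin n) :
    Odd (Finset.univ.filter (fun j => f j = i)).card := by
  have hη := h (fun k => if k = i then -1 else 1)
  have hl : (∏ j : Fin m, (if f j = i then (-1 : ℤˣ) else 1))
      = (-1 : ℤˣ) ^ (Finset.univ.filter (fun j => f j = i)).card := by
    rw [← Finset.prod_filter, Finset.prod_const]
  have hr : (∏ k : Fin n, (if k = i then (-1 : ℤˣ) else 1)) = -1 := by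
    rw [Finset.prod_ite_eq' Finset.univ i (fun _ => (-1 : ℤˣ))]
    simp
  have key : (-1 : ℤˣ) ^ (Finset.univ.filter (fun j => f j = i)).card = -1 := by
    rw [← hl, hη, hr]
  rcases Nat.even_or_odd (Finset.univ.filter (fun j => f j = i)).card with he | ho
  · exfalso
    rw [he.neg_one_pow] at key
    exact absurd key (by decide)
  · exact ho

lemma counts_sum (f : Fin m → Fin n) :
    ∑ i : Fin n, (Finset.univ.filter (fun j => f j = i)).card = m := by
  rw [← Finset.card_eq_sum_card_fiberwise (fun j _ => Finset.mem_univ (f j))]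
  simp

lemma inv_eq_bot {m : ℕ} (hm : m < n) : invSpace n m = ⊥ := by
  rw [Submodule.eq_bot_iff]
  intro x hx
  by_contra hx0
  have hc : toCoeff n m x ≠ 0 := by
    intro h0
    exact hx0 ((reprEquiv n m).injective (by rw [map_zero]; exact h0))
  obtain ⟨f, hf⟩ := Finsupp.ne_iff.mp hc
  have hf' : toCoeff n m x f ≠ 0 := by simpa using hf
  have hodd := fun i => count_odd n m (prods_eq_of_mem n m hx hf') i
  have h1 : ∀ i ∈ Finset.univ, 1 ≤ (Finset.univ.filter (fun j => f j = i)).card :=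
    fun i _ => (hodd i).pos
  have h2 := Finset.card_nsmul_le_sum Finset.univ
    (fun i => (Finset.univ.filter (fun j => f j = i)).card) 1 h1
  rw [counts_sum] at h2
  simp only [Finset.card_univ, Fintype.card_fin, smul_eq_mul, mul_one] at h2
  omega

lemma bvec_perm_mem (σ : Equiv.Perm (Fin n)) : bvec n n ⇑σ ∈ invSpace n n := by
  rw [mem_invSpace_iff]
  intro η f
  rcases eq_or_ne (toCoeff n n (bvec n n ⇑σ) f) 0 with h | h
  · rw [h, mul_zero, mul_zero]
  · congr 1
    have hf : f = ⇑σ := by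
      by_contra hne
      rw [toCoeff_bvec, Finsupp.single_eq_of_ne' (fun hh => hne hh.symm)] at h
      exact h rfl
    subst hf
    push_cast
    exact Equiv.prod_comp σ (fun i => ((η i : ℤ) : ℂ))

lemma bij_of_mem {x : ⨂[ℂ] _ : Fin n, (Fin n → ℂ)} (hx : x ∈ invSpace n n)
    {f : Fin n → Fin n} (hf : toCoeff n n x f ≠ 0) : Function.Bijective f := by
  have hodd := fun i => count_odd n n (prods_eq_of_mem n n hx hf) i
  have hsum := counts_sum n n f
  have hone : ∀ i : Fin n, (Finset.univ.filter (fun j => f j = i)).card = 1 := by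
    intro i
    by_contra hne
    have hlt : (Finset.univ.sum fun _ => 1)
        < Finset.univ.sum (fun i => (Finset.univ.filter (fun j => f j = i)).card) :=
      Finset.sum_lt_sum (fun k _ => (hodd k).pos)
        ⟨i, Finset.mem_univ i, by obtain ⟨r, hr⟩ := hodd i; omega⟩
    simp only [Finset.sum_const, Finset.card_univ, Fintype.card_fin, smul_eq_mul, mul_one] at hlt
    omega
  have hinj : Function.Injective f := by
    intro a b hab
    have ha : a ∈ Finset.univ.filter (fun j => f j = f b) :=
      Finset.mem_filter.mpr ⟨Finset.mem_univ a, hab⟩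
    have hb : b ∈ Finset.univ.filter (fun j => f j = f b) :=
      Finset.mem_filter.mpr ⟨Finset.mem_univ b, rfl⟩
    exact Finset.card_le_one.mp (le_of_eq (hone (f b))) a ha b hb
  exact Finite.injective_iff_bijective.mp hinj

lemma li_perm : LinearIndependent ℂ (fun σ : Equiv.Perm (Fin n) => bvec n n ⇑σ) := by
  have h := (B n n).linearIndependent.comp (fun σ : Equiv.Perm (Fin n) => ⇑σ)
    (fun σ τ h => Equiv.coe_fn_injective h)
  have he : (⇑(B n n) ∘ fun σ : Equiv.Perm (Fin n) => ⇑σ)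
      = fun σ : Equiv.Perm (Fin n) => bvec n n ⇑σ := by
    funext σ
    simp [Function.comp, B_apply]
  rwa [he] at h

lemma span_eq_inv :
    Submodule.span ℂ (Set.range (fun σ : Equiv.Perm (Fin n) => bvec n n ⇑σ))
      = invSpace n n := by
  apply le_antisymm
  · rw [Submodule.span_le]
    rintro - ⟨σ, rfl⟩
    exact bvec_perm_mem n σ
  · intro x hx
    have hxeq : ofCoeff n n (toCoeff n n x) = x := LinearMap.congr_fun (ofCoeff_toCoeff n n) x
    rw [← hxeq, ofCoeff, Finsupp.linearCombination_apply, Finsupp.sum]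
    apply Submodule.sum_mem
    intro f hf
    apply Submodule.smul_mem
    apply Submodule.subset_span
    have hbij := bij_of_mem n hx (Finsupp.mem_support_iff.mp hf)
    exact ⟨Equiv.ofBijective f hbij, rfl⟩

lemma signedPermW_bvec (σ : Equiv.Perm (Fin n)) (g : Fin n → Fin n) :
    signedPermW n σ (bvec n n g)
      = ((Equiv.Perm.sign σ : ℤ) : ℂ) • bvec n n (g ∘ ⇑σ⁻¹) := by
  simp only [signedPermW, LinearMap.smul_apply, LinearEquiv.coe_coe, bvec,
    PiTensorProduct.reindex_tprod]
  rfl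

def wvec (τ : Equiv.Perm (Fin n)) : ⨂[ℂ] _ : Fin n, (Fin n → ℂ) :=
  ((Equiv.Perm.sign τ : ℤ) : ℂ) • bvec n n ⇑τ⁻¹

lemma signedPermW_wvec (σ τ : Equiv.Perm (Fin n)) :
    signedPermW n σ (wvec n τ) = wvec n (σ * τ) := by
  rw [wvec, map_smul, signedPermW_bvec, wvec, smul_smul]
  have h1 : ((Equiv.Perm.sign (σ * τ) : ℤ) : ℂ)
      = ((Equiv.Perm.sign τ : ℤ) : ℂ) * ((Equiv.Perm.sign σ : ℤ) : ℂ) := by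
    rw [Equiv.Perm.sign_mul]
    push_cast
    ring
  rw [h1]
  congr 1

lemma li_wvec : LinearIndependent ℂ (wvec n) := by
  have h1 : LinearIndependent ℂ (fun τ : Equiv.Perm (Fin n) => bvec n n ⇑τ⁻¹) :=
    (li_perm n).comp (fun τ => τ⁻¹) (fun a b h => inv_injective h)
  have h2 := h1.units_smul
    (fun τ : Equiv.Perm (Fin n) => Units.map (Int.castRingHom ℂ).toMonoidHom (Equiv.Perm.sign τ))
  have h3 : ((fun τ : Equiv.Perm (Fin n) =>
        Units.map (Int.castRingHom ℂ).toMonoidHom (Equiv.Perm.sign τ))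
      • fun τ : Equiv.Perm (Fin n) => bvec n n ⇑τ⁻¹) = wvec n := by
    funext τ
    simp only [Pi.smul_apply', wvec, Units.smul_def, Units.coe_map, MonoidHom.coe_coe]
    rfl
  rwa [h3] at h2

end Stmt13Aux

/-- For `G_ℝ = GL(n,ℝ)`, `K_ℝ = O(n)`, `M_ℝ = O(1)ⁿ`, `V = ℂⁿ` and
`μ₀ = sgn`:  the `M_ℝ`-invariants `(μ₀* ⊗ V^{⊗m})^{M_ℝ}` vanish for `m < n`; for `m = n`
they have dimension `n!` with basis `{e_{σ(1)} ⊗ ⋯ ⊗ e_{σ(n)} : σ ∈ S_n}`; moreover under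
the (sgn-twisted) signed permutation action of `W_ℝ = S_n` this space is isomorphic to the
regular representation `ℂ[S_n]`. -/


theorem stmt13 :
    -- (i) vanishing for m < n:
    (∀ m : ℕ, m < n → invSpace n m = ⊥)
    -- (ii) for m = n, the e_{σ(1)} ⊗ ⋯ ⊗ e_{σ(n)} form a basis:
      ∧ LinearIndependent ℂ (fun σ : Equiv.Perm (Fin n) =>
          PiTensorProduct.tprod ℂ (fun j : Fin n => (Pi.single (σ j) 1 : Fin n → ℂ)))
      ∧ Submodule.span ℂ (Set.range (fun σ : Equiv.Perm (Fin n) =>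
          PiTensorProduct.tprod ℂ (fun j : Fin n => (Pi.single (σ j) 1 : Fin n → ℂ))))
        = invSpace n n
      ∧ Module.finrank ℂ (invSpace n n) = Nat.factorial n
    -- (iii) the invariants are W_ℝ-stable and, as an S_n-representation under the signed
    -- permutation action, isomorphic to the regular representation ℂ[S_n]:
      ∧ (∀ (σ : Equiv.Perm (Fin n)), ∀ t ∈ invSpace n n, signedPermW n σ t ∈ invSpace n n)
      ∧ ∃ Φ : MonoidAlgebra ℂ (Equiv.Perm (Fin n)) →ₗ[ℂ] (⨂[ℂ] _ : Fin n, (Fin n → ℂ)),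
          Function.Injective Φ
          ∧ LinearMap.range Φ = invSpace n n
          ∧ ∀ (σ : Equiv.Perm (Fin n)) (a : MonoidAlgebra ℂ (Equiv.Perm (Fin n))),
              Φ (MonoidAlgebra.single σ 1 * a) = signedPermW n σ (Φ a) := by
  classical
  have hspan : Submodule.span ℂ
      (Set.range (fun σ : Equiv.Perm (Fin n) => Stmt13Aux.bvec n n ⇑σ)) = invSpace n n :=
    Stmt13Aux.span_eq_inv n
  refine ⟨fun m hm => Stmt13Aux.inv_eq_bot n hm, Stmt13Aux.li_perm n, hspan, ?_, ?_, ?_⟩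
  · rw [← hspan, finrank_span_eq_card (Stmt13Aux.li_perm n)]
    simp [Fintype.card_perm]
  · intro σ t ht
    rw [← hspan] at ht ⊢
    induction ht using Submodule.span_induction with
    | mem x hx =>
        obtain ⟨τ, rfl⟩ := hx
        show signedPermW n σ (Stmt13Aux.bvec n n ⇑τ) ∈ _
        rw [Stmt13Aux.signedPermW_bvec]
        exact Submodule.smul_mem _ _ (Submodule.subset_span ⟨τ * σ⁻¹, rfl⟩)
    | zero => simpa using Submodule.zero_mem _
    | add x y hx hy hx' hy' => rw [map_add]; exact Submodule.add_mem _ hx' hy'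
    | smul c x hx hx' => rw [map_smul]; exact Submodule.smul_mem _ c hx'
  · refine ⟨(Finsupp.linearCombination ℂ (Stmt13Aux.wvec n)).comp
      (MonoidAlgebra.coeffLinearEquiv ℂ).toLinearMap, ?_, ?_, ?_⟩
    · exact (linearIndependent_iff_injective_finsuppLinearCombination.mp (Stmt13Aux.li_wvec n)).comp
        (MonoidAlgebra.coeffLinearEquiv ℂ).injective
    · rw [LinearMap.range_comp_of_range_eq_top _ (LinearEquiv.range _),
        Finsupp.range_linearCombination, ← hspan]
      apply le_antisymm
      · rw [Submodule.span_le]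
        rintro - ⟨τ, rfl⟩
        show ((Equiv.Perm.sign τ : ℤ) : ℂ) • Stmt13Aux.bvec n n ⇑τ⁻¹ ∈ _
        exact Submodule.smul_mem _ _ (Submodule.subset_span ⟨τ⁻¹, rfl⟩)
      · rw [Submodule.span_le]
        rintro - ⟨σ, rfl⟩
        have hb : Stmt13Aux.bvec n n ⇑σ
            = ((Equiv.Perm.sign σ : ℤ) : ℂ) • Stmt13Aux.wvec n σ⁻¹ := by
          rw [Stmt13Aux.wvec, inv_inv, smul_smul, Equiv.Perm.sign_inv]
          have h1 : ((Equiv.Perm.sign σ : ℤ) : ℂ) * ((Equiv.Perm.sign σ : ℤ) : ℂ) = 1 := by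
            rcases Int.units_eq_one_or (Equiv.Perm.sign σ) with h | h <;> rw [h] <;> norm_num
          rw [h1, one_smul]
        show Stmt13Aux.bvec n n ⇑σ ∈ _
        rw [hb]
        exact Submodule.smul_mem _ _ (Submodule.subset_span ⟨σ⁻¹, rfl⟩)
    · intro σ a
      induction a using MonoidAlgebra.induction_linear with
      | zero => simp
      | add f g hf hg => rw [mul_add]; simp only [map_add, hf, hg]
      | single τ c =>
      have key : Finsupp.linearCombination ℂ (Stmt13Aux.wvec n) (Finsupp.single (σ * τ) c)
          = signedPermW n σ (Finsupp.linearCombination ℂ (Stmt13Aux.wvec n)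
              (Finsupp.single τ c)) := by
        rw [Finsupp.linearCombination_single, Finsupp.linearCombination_single, map_smul,
          Stmt13Aux.signedPermW_wvec]
      rw [MonoidAlgebra.single_mul_single, one_mul]
      exact key

end Stmt13
end
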